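/- arXiv:2007.04960 — 15 statements merged into one kernel-verified Lean document; each statement's English description precedes it below -/
import Mathlib

section
/- In every line-up election, every winning line-up under the max-first sequential rule is reasonably satisfying; in particular, a reasonably satisfying line-up always exists. -/
open Function

section Defs

variable {C P : Type*}

/-- Utilitarian (summed) score of a line-up. -/
def utilScore [Fintype P] (S : C → P → ℚ) (π : P → C) : ℚ := ∑ p, S (π p) p

/-- Winner under the utilitarian rule. -/
def IsUtilWinner [Fintype P] (S : C → P → ℚ) (π : P → C) : Prop :=
  Function.Injective π ∧
    ∀ π' : P → C, Function.Injective π' → utilScore S π' ≤ utilScore S π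

/-- Egalitarian (minimum) score of a line-up. -/
def egalScore [Fintype P] [Nonempty P] (S : C → P → ℚ) (π : P → C) : ℚ :=
  Finset.univ.inf' Finset.univ_nonempty (fun p => S (π p) p)

/-- Winner under the egalitarian rule. -/
def IsEgalWinner [Fintype P] [Nonempty P] (S : C → P → ℚ) (π : P → C) : Prop :=
  Function.Injective π ∧
    ∀ π' : P → C, Function.Injective π' → egalScore S π' ≤ egalScore S π

/-- Outcome of the sequential rule that fills positions in increasing order of the
priority `r`: each position receives a best candidate among those not assigned to
an earlier position. -/
def FixedOrderOutcome (r : P → ℕ) (S : C → P → ℚ) (π : P → C) : Prop :=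
  Function.Injective π ∧
    ∀ p : P, ∀ c : C, (∀ p' : P, r p' < r p → c ≠ π p') → S c p ≤ S (π p) p

/-- Outcome of some sequential rule: positions are filled one at a time in some order,
each receiving a best remaining candidate. -/
def SeqOutcome (S : C → P → ℚ) (π : P → C) : Prop :=
  ∃ r : P → ℕ, Function.Injective r ∧ FixedOrderOutcome r S π

/-- Outcome of the max-first rule along the order `r`: at each step the assigned
candidate-position pair has maximal score among all remaining pairs. -/
def MaxFirstOrder (r : P → ℕ) (S : C → P → ℚ) (π : P → C) : Prop :=
  Function.Injective π ∧
    ∀ p p'' : P, r p ≤ r p'' → ∀ c : C,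
      (∀ p' : P, r p' < r p → c ≠ π p') → S c p'' ≤ S (π p) p

/-- Outcome of the max-first sequential rule. -/
def MaxFirstOutcome (S : C → P → ℚ) (π : P → C) : Prop :=
  ∃ r : P → ℕ, Function.Injective r ∧ MaxFirstOrder r S π

/-- Outcome of the min-first rule along the order `r`: at each step the filled
position is one whose best remaining candidate score is smallest among the remaining
positions, and it receives a best remaining candidate. -/
def MinFirstOrder (r : P → ℕ) (S : C → P → ℚ) (π : P → C) : Prop :=
  Function.Injective π ∧
    (∀ p : P, ∀ c : C, (∀ p' : P, r p' < r p → c ≠ π p') → S c p ≤ S (π p) p) ∧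
    (∀ p p'' : P, r p ≤ r p'' →
      ∃ c : C, (∀ p' : P, r p' < r p → c ≠ π p') ∧ S (π p) p ≤ S c p'')

/-- Outcome of the min-first sequential rule. -/
def MinFirstOutcome (S : C → P → ℚ) (π : P → C) : Prop :=
  ∃ r : P → ℕ, Function.Injective r ∧ MinFirstOrder r S π

/-- A line-up is reasonably satisfying if (i) there are no two positions `p, p'` with
`score_p(π_{p'}) > score_p(π_p)` and `score_p(π_{p'}) > score_{p'}(π_{p'})`, and
(ii) no unassigned candidate scores higher on some position than its occupant. -/
def ReasonablySatisfying (S : C → P → ℚ) (π : P → C) : Prop :=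
  (¬ ∃ p p' : P, S (π p') p > S (π p) p ∧ S (π p') p > S (π p') p') ∧
  (¬ ∃ (c : C) (p : P), c ∉ Set.range π ∧ S c p > S (π p) p)

/-- A line-up is score Pareto optimal if no line-up is at least as good on every
position and strictly better on some position. -/
def ScoreParetoOptimal (S : C → P → ℚ) (π : P → C) : Prop :=
  ¬ ∃ π' : P → C, Function.Injective π' ∧
      (∀ p : P, S (π p) p ≤ S (π' p) p) ∧ (∃ p : P, S (π p) p < S (π' p) p)

/-- The entries of `v` sorted in decreasing order; `sortedDesc v i` is the
`(i+1)`-st largest entry of `v`. -/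
def sortedDesc {n : ℕ} (v : Fin n → ℚ) : Fin n → ℚ :=
  v ∘ (Tuple.sort (fun i => -v i))

/-- Ordered weighted average of `v` with OWA-vector `Λ`. -/
def owa {n : ℕ} (Λ : Fin n → ℚ) (v : Fin n → ℚ) : ℚ :=
  ∑ i, Λ i * sortedDesc v i

/-- The score vector of a line-up. -/
def scoreVec {q : ℕ} (S : C → Fin q → ℚ) (π : Fin q → C) : Fin q → ℚ :=
  fun p => S (π p) p

/-- Winner under the OWA-rule `f^Λ`. -/
def IsOWAWinner {q : ℕ} (Λ : Fin q → ℚ) (S : C → Fin q → ℚ) (π : Fin q → C) : Prop :=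
  Function.Injective π ∧
    ∀ π' : Fin q → C, Function.Injective π' →
      owa Λ (scoreVec S π') ≤ owa Λ (scoreVec S π)

end Defs

lemma maxFirst_exists (n : ℕ) :
    ∀ {C P : Type*} [Fintype C] [Fintype P] (S : C → P → ℚ),
      Fintype.card P = n → Fintype.card P ≤ Fintype.card C →
      ∃ π : P → C, MaxFirstOutcome S π := by
  induction n with
  | zero =>
    intro C P _ _ S hP _
    haveI : IsEmpty P := Fintype.card_eq_zero_iff.mp hP
    exact ⟨fun p => isEmptyElim p, fun p => isEmptyElim p,
      fun a => isEmptyElim a, fun a => isEmptyElim a, fun p => isEmptyElim p⟩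
  | succ n ih =>
    intro C P _ _ S hP hle
    classical
    haveI : Nonempty P := Fintype.card_pos_iff.mp (by omega)
    haveI : Nonempty C := Fintype.card_pos_iff.mp (by omega)
    obtain ⟨⟨c₀, p₀⟩, hmax⟩ := Finite.exists_max (fun cp : C × P => S cp.1 cp.2)
    have hmax' : ∀ c p, S c p ≤ S c₀ p₀ := fun c p => hmax (c, p)
    have hcardP : Fintype.card {p : P // p ≠ p₀} = n := by
      have := Fintype.card_subtype_compl (fun p : P => p = p₀)
      simp only [Fintype.card_subtype_eq] at this
      rw [this]; omega
    have hcardC : Fintype.card {c : C // c ≠ c₀} = Fintype.card C - 1 := by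
      have := Fintype.card_subtype_compl (fun c : C => c = c₀)
      simp only [Fintype.card_subtype_eq] at this; exact this
    obtain ⟨π', r', hr'inj, hπ'inj, hmf'⟩ :=
      ih (fun (c : {c : C // c ≠ c₀}) (p : {p : P // p ≠ p₀}) => S c.1 p.1)
        hcardP (by omega)
    let π : P → C := fun p => if h : p = p₀ then c₀ else (π' ⟨p, h⟩).1
    let rr : P → ℕ := fun p => if h : p = p₀ then 0 else r' ⟨p, h⟩ + 1
    have hπ0 : π p₀ = c₀ := dif_pos rfl
    have hπne : ∀ p (h : p ≠ p₀), π p = (π' ⟨p, h⟩).1 := fun p h => dif_neg h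
    have hr0 : rr p₀ = 0 := dif_pos rfl
    have hrne : ∀ p (h : p ≠ p₀), rr p = r' ⟨p, h⟩ + 1 := fun p h => dif_neg h
    refine ⟨π, rr, ?_, ?_, ?_⟩
    · intro a b hab
      by_cases ha : a = p₀ <;> by_cases hb : b = p₀
      · rw [ha, hb]
      · subst ha; rw [hr0, hrne b hb] at hab; exact absurd hab (by omega)
      · subst hb; rw [hr0, hrne a ha] at hab; exact absurd hab.symm (by omega)
      · rw [hrne a ha, hrne b hb] at hab
        exact congrArg Subtype.val (hr'inj (Nat.add_right_cancel hab))
    · intro a b hab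
      by_cases ha : a = p₀ <;> by_cases hb : b = p₀
      · rw [ha, hb]
      · subst ha; rw [hπ0, hπne b hb] at hab; exact absurd hab.symm (π' ⟨b, hb⟩).2
      · subst hb; rw [hπ0, hπne a ha] at hab; exact absurd hab (π' ⟨a, ha⟩).2
      · rw [hπne a ha, hπne b hb] at hab
        exact congrArg Subtype.val (hπ'inj (Subtype.ext hab))
    · intro p p'' hle2 c hc
      by_cases hp : p = p₀
      · subst hp; rw [hπ0]; exact hmax' c p''
      · have hcc0 : c ≠ c₀ := by
          have := hc p₀ (by rw [hr0, hrne p hp]; omega)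
          rwa [hπ0] at this
        have hp'' : p'' ≠ p₀ := by
          intro h; subst h; rw [hr0, hrne p hp] at hle2; omega
        rw [hrne p hp, hrne p'' hp''] at hle2
        have key := hmf' ⟨p, hp⟩ ⟨p'', hp''⟩ (by omega) ⟨c, hcc0⟩ ?_
        · rw [hπne p hp]; exact key
        · rintro ⟨qv, hqv⟩ hq heq
          have hq1 : rr qv < rr p := by rw [hrne qv hqv, hrne p hp]; omega
          have h2 := hc qv hq1
          apply h2
          rw [hπne qv hqv]
          exact congrArg Subtype.val heq

/-- Every winning line-up under the max-first rule is reasonably satisfying;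
in particular a reasonably satisfying line-up always exists. -/
theorem stmt0 {C P : Type*} [Fintype C] [Fintype P] (S : C → P → ℚ)
    (hcard : Fintype.card P ≤ Fintype.card C) :
    (∀ π : P → C, MaxFirstOutcome S π → ReasonablySatisfying S π) ∧
    (∃ π : P → C, Function.Injective π ∧ ReasonablySatisfying S π) := by
  have part1 : ∀ π : P → C, MaxFirstOutcome S π → ReasonablySatisfying S π := by
    rintro π ⟨r, hrinj, hπinj, hmf⟩
    constructor
    · rintro ⟨p, p', h1, h2⟩
      rcases le_or_gt (r p) (r p') with h | h
      · have := hmf p p (le_refl _) (π p')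
          (fun q hq he => by
            have := hπinj he; subst this; omega)
        exact absurd this (not_le.mpr h1)
      · have := hmf p' p (le_of_lt h) (π p')
          (fun q hq he => by
            have := hπinj he; subst this; omega)
        exact absurd this (not_le.mpr h2)
    · rintro ⟨c, p, hc, hgt⟩
      have := hmf p p (le_refl _) c (fun q _ he => hc ⟨q, he.symm⟩)
      exact absurd this (not_le.mpr hgt)
  refine ⟨part1, ?_⟩
  obtain ⟨π, hπ⟩ := maxFirst_exists (Fintype.card P) S rfl hcard
  have hrs := part1 π hπ
  obtain ⟨r, _, hinj, _⟩ := hπ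
  exact ⟨π, hinj, hrs⟩
end

section
/- Every OWA-rule (maximizing the ordered weighted average of the score vector for a nonnegative OWA-vector) weakly satisfies score Pareto optimality: for every line-up election, at least one winning line-up is score Pareto optimal. -/
open Function

/-!
The score of a line-up under any nonnegative OWA-vector is monotone in the score vector, since
the `i`-th largest entry is. Hence among the OWA-winners (which exist as soon as some injective
line-up does) one with maximal utilitarian score is score Pareto optimal: a line-up dominating it
would again be an OWA-winner, with strictly larger utilitarian score.
-/

lemma sortedDesc_antitone {n : ℕ} (v : Fin n → ℚ) : Antitone (sortedDesc v) := fun _ _ hij =>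
  neg_le_neg_iff.1 (Tuple.monotone_sort (fun j => -v j) hij)

lemma sortedDesc_mono {n : ℕ} {v w : Fin n → ℚ} (h : ∀ j, v j ≤ w j) (i : Fin n) :
    sortedDesc v i ≤ sortedDesc w i := by
  set σ := Tuple.sort (fun j => -v j)
  set τ := Tuple.sort (fun j => -w j)
  -- pigeonhole: the `i + 1` largest entries of `v` cannot all be among the `i` largest of `w`
  obtain ⟨k, hki, hik⟩ : ∃ k ≤ i, i ≤ τ.symm (σ k) := by
    by_contra! hlt
    have hcard := Finset.card_le_card_of_injOn (s := Finset.Iic i) (t := Finset.Iio i)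
      (τ.symm ∘ σ) (fun k hk => Finset.mem_Iio.2 (hlt k (Finset.mem_Iic.1 hk)))
      ((τ.symm.injective.comp σ.injective).injOn)
    simp only [Fin.card_Iic, Fin.card_Iio] at hcard
    omega
  calc sortedDesc v i ≤ sortedDesc v k := sortedDesc_antitone v hki
    _ ≤ w (σ k) := h (σ k)
    _ = sortedDesc w (τ.symm (σ k)) := by simp [sortedDesc, τ]
    _ ≤ sortedDesc w i := sortedDesc_antitone w hik

lemma owa_mono {n : ℕ} {Λ v w : Fin n → ℚ} (hΛ : ∀ i, 0 ≤ Λ i) (h : ∀ j, v j ≤ w j) :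
    owa Λ v ≤ owa Λ w :=
  Finset.sum_le_sum fun i _ => mul_le_mul_of_nonneg_left (sortedDesc_mono h i) (hΛ i)

lemma exists_isOWAWinner {C : Type*} [Fintype C] {q : ℕ} (hq : q ≤ Fintype.card C)
    (Λ : Fin q → ℚ) (S : C → Fin q → ℚ) : ∃ π : Fin q → C, IsOWAWinner Λ S π := by
  classical
  obtain ⟨e⟩ : Nonempty (Fin q ↪ C) := Embedding.nonempty_of_card_le (by simpa using hq)
  obtain ⟨π, hπ, hmax⟩ := Finset.exists_max_image {π : Fin q → C | Injective π}
    (fun π => owa Λ (scoreVec S π)) ⟨e, by simpa using e.injective⟩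
  exact ⟨π, by simpa using hπ, fun π' hπ' => hmax π' (by simpa using hπ')⟩

lemma IsOWAWinner.of_le {C : Type*} {q : ℕ} {Λ : Fin q → ℚ} (hΛ : ∀ i, 0 ≤ Λ i)
    {S : C → Fin q → ℚ} {π π' : Fin q → C} (hπ : IsOWAWinner Λ S π) (hπ' : Injective π')
    (hle : ∀ p, S (π p) p ≤ S (π' p) p) : IsOWAWinner Λ S π' :=
  ⟨hπ', fun π'' hπ'' => (hπ.2 π'' hπ'').trans (owa_mono hΛ hle)⟩

lemma scoreParetoOptimal_of_utilScore_le {C P : Type*} [Fintype P] {S : C → P → ℚ} {π : P → C}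
    (h : ∀ π', Injective π' → (∀ p, S (π p) p ≤ S (π' p) p) → utilScore S π' ≤ utilScore S π) :
    ScoreParetoOptimal S π := by
  rintro ⟨π', hπ', hle, p, hlt⟩
  have hsum : utilScore S π < utilScore S π' :=
    Finset.sum_lt_sum (fun p _ => hle p) ⟨p, Finset.mem_univ p, hlt⟩
  exact (h π' hπ' hle).not_gt hsum

/-- Every OWA-rule with a nonnegative OWA-vector weakly satisfies score Pareto
optimality: some winning line-up is score Pareto optimal. -/
theorem stmt1 {C : Type*} [Fintype C] {q : ℕ} (hq : q ≤ Fintype.card C)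
    (Λ : Fin q → ℚ) (hΛ : ∀ i, 0 ≤ Λ i) (S : C → Fin q → ℚ) :
    ∃ π : Fin q → C, IsOWAWinner Λ S π ∧ ScoreParetoOptimal S π := by
  classical
  obtain ⟨π₀, hπ₀⟩ := exists_isOWAWinner hq Λ S
  obtain ⟨π, hπ, hmax⟩ := Finset.exists_max_image {π : Fin q → C | IsOWAWinner Λ S π}
    (utilScore S) ⟨π₀, by simpa using hπ₀⟩
  replace hπ : IsOWAWinner Λ S π := by simpa using hπ
  refine ⟨π, hπ, scoreParetoOptimal_of_utilScore_le fun π' hπ' hle => hmax π' ?_⟩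
  simpa using hπ.of_le hΛ hπ' hle
end

section
/- The utilitarian rule (maximizing the sum of scores) strongly satisfies score consistency: if a line-up π is winning in election (S,C,P) and in election (S',C,P), then the set of common winners of the two elections equals the set of winners of the combined election (S+S',C,P). -/
open Function

lemma utilScore_add {C P : Type*} [Fintype P] (S S' : C → P → ℚ) (π : P → C) :
    utilScore (fun c p => S c p + S' c p) π = utilScore S π + utilScore S' π := by
  simp [utilScore, Finset.sum_add_distrib]

/-- The utilitarian rule strongly satisfies score consistency. -/
theorem stmt4 {C P : Type*} [Fintype P] (S S' : C → P → ℚ)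
    (h : ∃ π : P → C, IsUtilWinner S π ∧ IsUtilWinner S' π) :
    {π : P → C | IsUtilWinner S π ∧ IsUtilWinner S' π} =
      {π : P → C | IsUtilWinner (fun c p => S c p + S' c p) π} := by
  obtain ⟨π₀, ⟨hi₀, h₀⟩, ⟨_, h₀'⟩⟩ := h
  ext π
  simp only [Set.mem_setOf_eq]
  constructor
  · rintro ⟨⟨hi, hS⟩, ⟨_, hS'⟩⟩
    refine ⟨hi, fun π' hπ' => ?_⟩
    rw [utilScore_add, utilScore_add]
    exact add_le_add (hS π' hπ') (hS' π' hπ')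
  · rintro ⟨hi, hmax⟩
    have key := hmax π₀ hi₀
    rw [utilScore_add, utilScore_add] at key
    have h1 : utilScore S π = utilScore S π₀ :=
      le_antisymm (h₀ π hi) (by linarith [h₀' π hi])
    have h2 : utilScore S' π = utilScore S' π₀ :=
      le_antisymm (h₀' π hi) (by linarith)
    exact ⟨⟨hi, fun π' hπ' => h1 ▸ h₀ π' hπ'⟩,
           ⟨hi, fun π' hπ' => h2 ▸ h₀' π' hπ'⟩⟩
end

section
/- The utilitarian rule strongly satisfies monotonicity: if π is a winning line-up of (S,C,P) and S' is obtained from S by increasing score_p(π_p) for some position p (leaving all other entries unchanged), then π is still winning in (S',C,P), and every winner of (S',C,P) was already a winner of (S,C,P). -/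
open Function

/-- The utilitarian rule strongly satisfies monotonicity. -/
theorem stmt5 {C P : Type*} [Fintype P] (S S' : C → P → ℚ) (π : P → C) (p0 : P)
    (hwin : IsUtilWinner S π) (hinc : S (π p0) p0 < S' (π p0) p0)
    (hsame : ∀ (c : C) (p : P), (c, p) ≠ (π p0, p0) → S' c p = S c p) :
    IsUtilWinner S' π ∧ ∀ π' : P → C, IsUtilWinner S' π' → IsUtilWinner S π' := by
  classical
  set d : ℚ := S' (π p0) p0 - S (π p0) p0 with hd
  have hdpos : 0 < d := by simp [hd]; linarith
  have key : ∀ π' : P → C, utilScore S' π' =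
      utilScore S π' + (if π' p0 = π p0 then d else 0) := by
    intro π'
    by_cases h : π' p0 = π p0
    · simp only [h, if_pos]
      unfold utilScore
      have : ∀ p ∈ Finset.univ, S' (π' p) p = S (π' p) p + (if p = p0 then d else 0) := by
        intro p _
        by_cases hp : p = p0
        · subst hp; simp [h, hd]
        · rw [hsame (π' p) p (by simp [hp]), if_neg hp, add_zero]
      rw [Finset.sum_congr rfl this, Finset.sum_add_distrib, Finset.sum_ite_eq']
      simp
    · simp only [h, if_neg, not_false_iff, add_zero]
      unfold utilScore
      refine Finset.sum_congr rfl fun p _ => ?_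
      apply hsame
      intro hc
      simp only [Prod.mk.injEq] at hc
      obtain ⟨h1, h2⟩ := hc
      subst h2
      exact h h1
  obtain ⟨hinj, hmax⟩ := hwin
  have hwin' : IsUtilWinner S' π := by
    refine ⟨hinj, fun π' hπ' => ?_⟩
    rw [key, key, if_pos rfl]
    have := hmax π' hπ'
    split_ifs <;> linarith
  refine ⟨hwin', fun π' ⟨hπ'inj, hπ'max⟩ => ?_⟩
  have h1 := hπ'max π hwin'.1
  have h2 := hmax π' hπ'inj
  rw [key, key, if_pos rfl] at h1
  have heq : π' p0 = π p0 := by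
    by_contra h
    rw [if_neg h] at h1; linarith
  rw [if_pos heq] at h1
  refine ⟨hπ'inj, fun π'' hπ'' => ?_⟩
  calc utilScore S π'' ≤ utilScore S π := hmax π'' hπ''
    _ ≤ utilScore S π' := by linarith
end

section
/- The egalitarian rule violates weak monotonicity: there exists a line-up election (S,C,P), a winning line-up π under the egalitarian rule, and a score increase of score_p(π_p) for some position p, such that π is no longer winning after the increase. -/
open Function

section Defs

variable {C P : Type*}

section Egalitarian

variable {C P : Type*} [Fintype P] [Nonempty P]

theorem egalScore_le (S : C → P → ℚ) (π : P → C) (p : P) : egalScore S π ≤ S (π p) p :=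
  Finset.inf'_le _ (Finset.mem_univ p)

theorem egalScore_fin_two (S : C → Fin 2 → ℚ) (π : Fin 2 → C) :
    egalScore S π = min (S (π 0) 0) (S (π 1) 1) := by
  simp [egalScore, Fin.univ_succ, Finset.inf'_insert]

theorem isEgalWinner_of_forall_le {S : C → P → ℚ} {π : P → C} (hπ : Injective π) (p : P)
    (h : ∀ c, S c p ≤ egalScore S π) : IsEgalWinner S π :=
  ⟨hπ, fun π' _ => (egalScore_le S π' p).trans (h (π' p))⟩

theorem not_isEgalWinner_of_lt {S : C → P → ℚ} {π π' : P → C} (hπ' : Injective π')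
    (h : egalScore S π < egalScore S π') : ¬ IsEgalWinner S π :=
  fun hwin => (hwin.2 π' hπ').not_gt h

end Egalitarian

/-- The egalitarian rule violates weak monotonicity. -/
theorem stmt6 : ∃ (S S' : Fin 3 → Fin 2 → ℚ) (π : Fin 2 → Fin 3) (p0 : Fin 2),
    IsEgalWinner S π ∧ S (π p0) p0 < S' (π p0) p0 ∧
    (∀ (c : Fin 3) (p : Fin 2), (c, p) ≠ (π p0, p0) → S' c p = S c p) ∧
    ¬ IsEgalWinner S' π := by
  -- Candidates `a, b, c` are `0, 1, 2`. The line-up `(b, a)` wins with minimum 3; raising `a`'s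
  -- score at position `1` to 4 lets `(c, a)` reach minimum 4.
  refine ⟨![![0, 3], ![3, 0], ![4, 0]], ![![0, 4], ![3, 0], ![4, 0]], ![1, 0], 1,
    ?_, by decide, by decide, ?_⟩
  · refine isEgalWinner_of_forall_le (by decide) 1 fun c => ?_
    rw [egalScore_fin_two]
    fin_cases c <;> norm_num
  · refine not_isEgalWinner_of_lt (π' := ![2, 0]) (by decide) ?_
    rw [egalScore_fin_two, egalScore_fin_two]
    norm_num [Matrix.cons_val_two]
end Defs
end

section
/- The min-first sequential rule violates weak monotonicity: in the 2-candidate 2-position election with scores a:(2,1), b:(0,0), the unique winner is (b,a), but after increasing score_{p_2}(a) from 1 to 3, the unique winner is (a,b). -/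
open Function

/-- The min-first rule violates weak monotonicity: with scores a:(2,1), b:(0,0) the
unique winner is (b,a); after raising score_{p2}(a) to 3 the unique winner is (a,b). -/
theorem stmt8 :
    (∀ π : Fin 2 → Fin 2,
      MinFirstOutcome (![![2, 1], ![0, 0]] : Fin 2 → Fin 2 → ℚ) π ↔ π = ![1, 0]) ∧
    (∀ π : Fin 2 → Fin 2,
      MinFirstOutcome (![![2, 3], ![0, 0]] : Fin 2 → Fin 2 → ℚ) π ↔ π = ![0, 1]) := by
  have htwo : ∀ i : Fin 2, i = 0 ∨ i = 1 := by decide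
  constructor
  · intro π
    constructor
    · rintro ⟨r, hr, hinj, h1, h2⟩
      have hne : r 0 ≠ r 1 := fun h => (by decide : (0:Fin 2) ≠ 1) (hr h)
      rcases lt_or_gt_of_ne hne with h01 | h10
      · exfalso
        have hemp : ∀ p' : Fin 2, r p' < r 0 → (0:Fin 2) ≠ π p' := by
          intro p' hp'
          rcases htwo p' with rfl | rfl <;> omega
        have ha := h1 0 0 hemp
        have hπ0 : π 0 = 0 := by
          rcases htwo (π 0) with h | h
          · exact h
          · rw [h] at ha; norm_num [Matrix.cons_val_zero, Matrix.cons_val_one, Matrix.head_cons] at ha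
        obtain ⟨c, -, hle⟩ := h2 0 1 (le_of_lt h01)
        rw [hπ0] at hle
        rcases htwo c with rfl | rfl <;>
          norm_num [Matrix.cons_val_zero, Matrix.cons_val_one, Matrix.head_cons] at hle
      · have hemp : ∀ p' : Fin 2, r p' < r 1 → (0:Fin 2) ≠ π p' := by
          intro p' hp'
          rcases htwo p' with rfl | rfl <;> omega
        have ha := h1 1 0 hemp
        have hπ1 : π 1 = 0 := by
          rcases htwo (π 1) with h | h
          · exact h
          · rw [h] at ha; norm_num [Matrix.cons_val_zero, Matrix.cons_val_one, Matrix.head_cons] at ha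
        have hπ0 : π 0 = 1 := by
          rcases htwo (π 0) with h | h
          · exact absurd (hinj (h.trans hπ1.symm)) (by decide)
          · exact h
        funext i
        rcases htwo i with rfl | rfl <;> simp [hπ0, hπ1]
    · rintro rfl
      exact ⟨![1,0], by unfold Function.Injective; decide,
        by unfold MinFirstOrder Function.Injective; decide⟩
  · intro π
    constructor
    · rintro ⟨r, hr, hinj, h1, h2⟩
      have hne : r 0 ≠ r 1 := fun h => (by decide : (0:Fin 2) ≠ 1) (hr h)
      rcases lt_or_gt_of_ne hne with h01 | h10
      · have hemp : ∀ p' : Fin 2, r p' < r 0 → (0:Fin 2) ≠ π p' := by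
          intro p' hp'
          rcases htwo p' with rfl | rfl <;> omega
        have ha := h1 0 0 hemp
        have hπ0 : π 0 = 0 := by
          rcases htwo (π 0) with h | h
          · exact h
          · rw [h] at ha; norm_num [Matrix.cons_val_zero, Matrix.cons_val_one, Matrix.head_cons] at ha
        have hπ1 : π 1 = 1 := by
          rcases htwo (π 1) with h | h
          · exact absurd (hinj (hπ0.trans h.symm)) (by decide)
          · exact h
        funext i
        rcases htwo i with rfl | rfl <;> simp [hπ0, hπ1]
      · exfalso
        have hemp : ∀ p' : Fin 2, r p' < r 1 → (0:Fin 2) ≠ π p' := by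
          intro p' hp'
          rcases htwo p' with rfl | rfl <;> omega
        have ha := h1 1 0 hemp
        have hπ1 : π 1 = 0 := by
          rcases htwo (π 1) with h | h
          · exact h
          · rw [h] at ha; norm_num [Matrix.cons_val_zero, Matrix.cons_val_one, Matrix.head_cons] at ha
        obtain ⟨c, -, hle⟩ := h2 1 0 (le_of_lt h10)
        rw [hπ1] at hle
        rcases htwo c with rfl | rfl <;>
          norm_num [Matrix.cons_val_zero, Matrix.cons_val_one, Matrix.head_cons] at hle
    · rintro rfl
      exact ⟨![0,1], by unfold Function.Injective; decide,
        by unfold MinFirstOrder Function.Injective; decide⟩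
end

section
/- The utilitarian rule satisfies weak line-up enlargement monotonicity: if π is a utilitarian-winning line-up of election (S,C,P) and (S',C,P∪{p*}) extends it by one new position p* (with S' agreeing with S on P), then there exists a utilitarian-winning line-up π' of the extended election such that every candidate assigned in π is also assigned in π'. -/
open Function

/-!
Take a utilitarian winner `σ` of the extended election sharing as many candidates with `π` as
possible, and suppose `π p₀` is not used by `σ`. Let `X` be the positions on the alternating path
`p₀, p₁, …` with `σ (some pᵢ) = π pᵢ₊₁`. Exchanging `π` and `σ` on `X` yields injective line-ups
`τ` of the extended and `ρ` of the original election with `score τ + score ρ = score σ + score π`.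
As `ρ` scores at most `π`, `τ` is again a winner, and it uses every candidate of `π` that `σ`
uses, together with `π p₀`: a contradiction.
-/

open Set

section UtilitarianExchange

variable {C P : Type*}

theorem exists_isUtilWinner [Fintype C] [Fintype P] (S : C → P → ℚ)
    (hcard : Fintype.card P ≤ Fintype.card C) : ∃ π, IsUtilWinner S π := by
  obtain ⟨f⟩ := Function.Embedding.nonempty_of_card_le hcard
  obtain ⟨π, hπ, hmax⟩ := Set.exists_max_image {π : P → C | Injective π} (utilScore S)
    (Set.toFinite _) ⟨f, f.injective⟩
  exact ⟨π, hπ, hmax⟩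

/-- Swapping `π` and `σ` on the positions of `X` keeps both line-ups injective. -/
structure IsAlternatingClosed (π : P → C) (σ : Option P → C) (X : Set P) : Prop where
  forward : ∀ p ∈ X, ∀ p', σ (some p) = π p' → p' ∈ X
  backward : ∀ q, ∀ p ∈ X, σ q = π p → ∃ p' ∈ X, q = some p'

section Exchange

variable {π : P → C} {σ : Option P → C} {X : Set P} [DecidablePred (· ∈ X)]

theorem IsAlternatingClosed.injective_piecewise_some (hX : IsAlternatingClosed π σ X)
    (hπ : Injective π) (hσ : Injective σ) : Injective (X.piecewise (σ ∘ some) π) :=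
  (X.injective_piecewise_iff).2
    ⟨(hσ.comp (Option.some_injective P)).injOn, hπ.injOn,
      fun _ hp _ hp' h => hp' (hX.forward _ hp _ h)⟩

theorem IsAlternatingClosed.injective_elim'_piecewise (hX : IsAlternatingClosed π σ X)
    (hπ : Injective π) (hσ : Injective σ) :
    Injective (Option.elim' (σ none) (X.piecewise π (σ ∘ some))) := by
  refine Option.injective_iff.2 ⟨?_, ?_⟩
  · refine (X.injective_piecewise_iff).2
      ⟨hπ.injOn, (hσ.comp (Option.some_injective P)).injOn, fun p hp p' hp' h => hp' ?_⟩
    obtain ⟨p'', hp'', hsome⟩ := hX.backward _ p hp h.symm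
    exact Option.some_injective P hsome ▸ hp''
  · rintro ⟨p, h⟩
    by_cases hp : p ∈ X
    · obtain ⟨_, _, hnone⟩ := hX.backward none p hp (by simpa [hp] using h.symm)
      exact nomatch hnone
    · exact Option.some_ne_none p (hσ (by simpa [hp] using h))

theorem IsAlternatingClosed.range_inter_subset (hX : IsAlternatingClosed π σ X) :
    range π ∩ range σ ⊆ range (Option.elim' (σ none) (X.piecewise π (σ ∘ some))) := by
  rintro _ ⟨⟨p', rfl⟩, q, hq⟩
  rcases q with _ | p
  · exact ⟨none, hq⟩
  by_cases hp : p ∈ X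
  · exact ⟨some p', by simp [hX.forward p hp p' hq]⟩
  · exact ⟨some p, by simp [hp, hq]⟩

theorem image_subset_range_elim'_piecewise :
    π '' X ⊆ range (Option.elim' (σ none) (X.piecewise π (σ ∘ some))) := by
  rintro _ ⟨p, hp, rfl⟩
  exact ⟨some p, by simp [hp]⟩

theorem utilScore_elim'_piecewise_add [Fintype P] (S : C → Option P → ℚ) :
    utilScore S (Option.elim' (σ none) (X.piecewise π (σ ∘ some))) +
        utilScore (fun c p => S c (some p)) (X.piecewise (σ ∘ some) π) =
      utilScore S σ + utilScore (fun c p => S c (some p)) π := by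
  simp only [utilScore, Fintype.sum_option, Option.elim'_none, Option.elim'_some]
  have hpt : ∀ p, S (X.piecewise π (σ ∘ some) p) (some p) +
      S (X.piecewise (σ ∘ some) π p) (some p) =
        S (σ (some p)) (some p) + S (π p) (some p) := by
    intro p
    by_cases hp : p ∈ X <;> simp [hp, add_comm]
  rw [add_assoc, add_assoc, ← Finset.sum_add_distrib, ← Finset.sum_add_distrib,
    Finset.sum_congr rfl fun p _ => hpt p]

end Exchange

theorem isAlternatingClosed_reachable {π : P → C} {σ : Option P → C} (hσ : Injective σ)
    {p₀ : P} (hp₀ : π p₀ ∉ range σ) :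
    IsAlternatingClosed π σ
      {p | Relation.ReflTransGen (fun p p' => σ (some p) = π p') p₀ p} where
  forward _ hp _ h := hp.tail h
  backward q p hp h := by
    rcases hp.cases_tail with rfl | ⟨p', hp', hstep⟩
    · exact absurd ⟨q, h⟩ hp₀
    · exact ⟨p', hp', hσ (h.trans hstep.symm)⟩

theorem IsUtilWinner.exists_range_inter_ssubset [Fintype P] {S : C → Option P → ℚ}
    {π : P → C} {σ : Option P → C} (hπ : IsUtilWinner (fun c p => S c (some p)) π)
    (hσ : IsUtilWinner S σ) {p₀ : P} (hp₀ : π p₀ ∉ range σ) :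
    ∃ τ, IsUtilWinner S τ ∧ range π ∩ range σ ⊂ range π ∩ range τ := by
  classical
  set X := {p | Relation.ReflTransGen (fun p p' => σ (some p) = π p') p₀ p}
  have hX : IsAlternatingClosed π σ X := isAlternatingClosed_reachable hσ.1 hp₀
  set τ := Option.elim' (σ none) (X.piecewise π (σ ∘ some))
  have hτ : IsUtilWinner S τ := by
    refine ⟨hX.injective_elim'_piecewise hπ.1 hσ.1, fun μ hμ => (hσ.2 μ hμ).trans ?_⟩
    have hρ := hπ.2 _ (hX.injective_piecewise_some hπ.1 hσ.1)
    linarith [utilScore_elim'_piecewise_add (π := π) (σ := σ) (X := X) S]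
  have hp₀τ : π p₀ ∈ range τ := image_subset_range_elim'_piecewise ⟨p₀, .refl, rfl⟩
  refine ⟨τ, hτ, (ssubset_iff_of_subset ?_).2
    ⟨π p₀, ⟨mem_range_self p₀, hp₀τ⟩, fun h => hp₀ h.2⟩⟩
  exact subset_inter inter_subset_left hX.range_inter_subset

end UtilitarianExchange

/-- The utilitarian rule satisfies weak line-up enlargement monotonicity. -/
theorem stmt9 {C P : Type*} [Fintype C] [Fintype P] (S : C → P → ℚ)
    (S' : C → Option P → ℚ) (hagree : ∀ c p, S' c (some p) = S c p)
    (hcard : Fintype.card P + 1 ≤ Fintype.card C)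
    (π : P → C) (h : IsUtilWinner S π) :
    ∃ π' : Option P → C, IsUtilWinner S' π' ∧ Set.range π ⊆ Set.range π' := by
  obtain rfl : S = fun c p => S' c (some p) := funext₂ fun c p => (hagree c p).symm
  obtain ⟨σ, hσ, hmax⟩ := Set.exists_max_image {σ | IsUtilWinner S' σ}
    (fun σ => (range π ∩ range σ).ncard) (Set.toFinite _)
    (exists_isUtilWinner S' (by simpa using hcard))
  refine ⟨σ, hσ, ?_⟩
  rintro _ ⟨p, rfl⟩
  by_contra hp
  obtain ⟨τ, hτ, hlt⟩ := h.exists_range_inter_ssubset hσ hp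
  exact (Set.ncard_lt_ncard hlt).not_ge (hmax τ hτ)
end

section
/- The egalitarian rule satisfies weak line-up enlargement monotonicity: if π is an egalitarian-winning line-up of (S,C,P) and one new position p* is added, then there exists an egalitarian-winning line-up π'' of the extended election whose set of assigned candidates contains all candidates assigned in π. -/
open Function

/-- The egalitarian rule satisfies weak line-up enlargement monotonicity. -/
theorem stmt10 {C P : Type*} [Fintype C] [Fintype P] [Nonempty P] (S : C → P → ℚ)
    (S' : C → Option P → ℚ) (hagree : ∀ c p, S' c (some p) = S c p)
    (hcard : Fintype.card P + 1 ≤ Fintype.card C)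
    (π : P → C) (h : IsEgalWinner S π) :
    ∃ π'' : Option P → C, IsEgalWinner S' π'' ∧ Set.range π ⊆ Set.range π'' := by
  classical
  obtain ⟨e⟩ : Nonempty (Option P ↪ C) := by
    apply Function.Embedding.nonempty_of_card_le
    simpa using hcard
  set T : Finset (Option P → C) := Finset.univ.filter (fun f => Function.Injective f) with hT
  have hTne : T.Nonempty := ⟨e, by simp [hT, e.injective]⟩
  obtain ⟨π₀, hπ₀T, hmax⟩ := T.exists_max_image (egalScore S') hTne
  set W : Finset (Option P → C) :=
    T.filter (fun f => ∀ g ∈ T, egalScore S' g ≤ egalScore S' f) with hW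
  have hπ₀W : π₀ ∈ W := by exact Finset.mem_filter.mpr ⟨hπ₀T, hmax⟩
  set A : (Option P → C) → ℕ :=
    fun f => (Finset.univ.filter (fun p : P => f (some p) = π p)).card with hA
  obtain ⟨π'', hπ''W, hAmax⟩ := W.exists_max_image A ⟨π₀, hπ₀W⟩
  have hπ''T : π'' ∈ T := (Finset.mem_filter.mp hπ''W).1
  have hπ''inj : Function.Injective π'' := by
    simpa [hT] using hπ''T
  have hπ''max : ∀ g : Option P → C, Function.Injective g →
      egalScore S' g ≤ egalScore S' π'' := by
    intro g hg
    exact (Finset.mem_filter.mp hπ''W).2 g (by simp [hT, hg])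
  refine ⟨π'', ⟨hπ''inj, hπ''max⟩, ?_⟩
  rintro _ ⟨p, rfl⟩
  by_contra hc
  have hc' : ∀ q : Option P, π'' q ≠ π p := by
    intro q hq; exact hc ⟨q, hq⟩
  set σ : Option P → C := Function.update π'' (some p) (π p) with hσ
  have hσinj : Function.Injective σ := by
    intro a b hab
    by_cases ha : a = some p <;> by_cases hb : b = some p
    · rw [ha, hb]
    · exfalso
      rw [hσ, ha, Function.update_self, Function.update_of_ne hb] at hab
      exact hc' b hab.symm
    · exfalso
      rw [hσ, hb, Function.update_self, Function.update_of_ne ha] at hab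
      exact hc' a hab
    · rw [hσ, Function.update_of_ne ha, Function.update_of_ne hb] at hab
      exact hπ''inj hab
  -- the key score bound at position `some p`
  have hbound : egalScore S' π'' ≤ S (π p) p := by
    set ρ : P → C := fun q => π'' (some q) with hρ
    have hρinj : Function.Injective ρ := fun a b hab =>
      Option.some_injective P (hπ''inj hab)
    have h1 : egalScore S' π'' ≤ egalScore S ρ := by
      apply Finset.le_inf'
      intro q _
      calc egalScore S' π'' ≤ S' (π'' (some q)) (some q) :=
            Finset.inf'_le _ (Finset.mem_univ (some q))
        _ = S (ρ q) q := hagree _ _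
    have h2 : egalScore S ρ ≤ egalScore S π := h.2 ρ hρinj
    have h3 : egalScore S π ≤ S (π p) p :=
      Finset.inf'_le _ (Finset.mem_univ p)
    linarith
  have hσge : egalScore S' π'' ≤ egalScore S' σ := by
    apply Finset.le_inf'
    intro q _
    by_cases hq : q = some p
    · subst hq
      rw [hσ, Function.update_self, hagree]
      exact hbound
    · rw [hσ, Function.update_of_ne hq]
      exact Finset.inf'_le _ (Finset.mem_univ q)
  have hσW : σ ∈ W := by
    refine Finset.mem_filter.mpr ⟨by simp [hT, hσinj], ?_⟩
    intro g hgT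
    have hginj : Function.Injective g := by simpa [hT] using hgT
    exact le_trans (hπ''max g hginj) hσge
  have hAlt : A π'' < A σ := by
    have hsub : Finset.univ.filter (fun q : P => π'' (some q) = π q) ⊆
        Finset.univ.filter (fun q : P => σ (some q) = π q) := by
      intro q hq
      simp only [Finset.mem_filter, Finset.mem_univ, true_and] at hq ⊢
      by_cases hqp : q = p
      · exact absurd hq (by rw [hqp]; exact hc' (some p))
      · rw [hσ, Function.update_of_ne (by simpa using hqp)]
        exact hq
    apply Finset.card_lt_card
    refine ⟨hsub, fun hsub' => ?_⟩
    have hp : p ∈ Finset.univ.filter (fun q : P => σ (some q) = π q) := by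
      simp [hσ]
    have := hsub' hp
    simp only [Finset.mem_filter, Finset.mem_univ, true_and] at this
    exact hc' (some p) this
  exact absurd (hAmax σ hσW) (not_le.mpr hAlt)
end

section
/- The fixed-order sequential rule satisfies weak score consistency: if π is a winning line-up of both (S,C,P) and (S',C,P) under the fixed-order rule (with the same fixed order of positions), then π is a winning line-up of the combined election (S+S',C,P). -/
open Function

/-- The fixed-order rule satisfies weak score consistency. -/
theorem stmt11 {C P : Type*} (r : P → ℕ) (hr : Function.Injective r)
    (S S' : C → P → ℚ) (π : P → C)
    (h1 : FixedOrderOutcome r S π) (h2 : FixedOrderOutcome r S' π) :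
    FixedOrderOutcome r (fun c p => S c p + S' c p) π := by
  exact ⟨h1.1, fun p c h => add_le_add (h1.2 p c h) (h2.2 p c h)⟩
end

section
/- The egalitarian rule satisfies weak position consistency: if π' is an egalitarian-winning line-up on P' and π'' an egalitarian-winning line-up on P'' with P' ∪ P'' = P, and π', π'' are overlapping-disjoint, then π' ∪ π'' is an egalitarian-winning line-up of the full election on P. -/
open Function

/-- The egalitarian rule satisfies weak position consistency. -/
theorem stmt13 {C P : Type*} [Fintype C] [Fintype P] [Nonempty P] [DecidableEq P]
    (S : C → P → ℚ)
    (P1 P2 : Finset P) (hcover : ∀ p : P, p ∈ P1 ∨ p ∈ P2)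
    [Nonempty {p // p ∈ P1}] [Nonempty {p // p ∈ P2}]
    (π1 : {p // p ∈ P1} → C) (π2 : {p // p ∈ P2} → C) (πs : P → C)
    (hod1 : ∀ (p : P) (h1 : p ∈ P1) (h2 : p ∈ P2), π1 ⟨p, h1⟩ = π2 ⟨p, h2⟩)
    (hod2 : ∀ (p : P) (h1 : p ∈ P1), p ∉ P2 → π1 ⟨p, h1⟩ ∉ Set.range π2)
    (hod3 : ∀ (p : P) (h2 : p ∈ P2), p ∉ P1 → π2 ⟨p, h2⟩ ∉ Set.range π1)
    (hs1 : ∀ (p : P) (h : p ∈ P1), πs p = π1 ⟨p, h⟩)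
    (hs2 : ∀ (p : P) (h : p ∈ P2), πs p = π2 ⟨p, h⟩)
    (h1 : IsEgalWinner (fun c (p : {p // p ∈ P1}) => S c p.1) π1)
    (h2 : IsEgalWinner (fun c (p : {p // p ∈ P2}) => S c p.1) π2) :
    IsEgalWinner S πs := by
  classical
  constructor
  · intro p p' hpp
    rcases Classical.em (p ∈ P1) with h1p | h1p
    · rcases Classical.em (p' ∈ P1) with h1p' | h1p'
      · have : π1 ⟨p, h1p⟩ = π1 ⟨p', h1p'⟩ := by
          rw [← hs1 p h1p, ← hs1 p' h1p']; exact hpp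
        exact congrArg Subtype.val (h1.1 this)
      · have h2p' := (hcover p').resolve_left h1p'
        by_cases h2p : p ∈ P2
        · have : π2 ⟨p, h2p⟩ = π2 ⟨p', h2p'⟩ := by
            rw [← hod1 p h1p h2p, ← hs1 p h1p, ← hs2 p' h2p']; exact hpp
          exact congrArg Subtype.val (h2.1 this)
        · exact absurd ⟨⟨p', h2p'⟩, by rw [← hs2 p' h2p', ← hpp, hs1 p h1p]⟩ (hod2 p h1p h2p)
    · have h2p := (hcover p).resolve_left h1p
      rcases Classical.em (p' ∈ P2) with h2p' | h2p'
      · have : π2 ⟨p, h2p⟩ = π2 ⟨p', h2p'⟩ := by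
          rw [← hs2 p h2p, ← hs2 p' h2p']; exact hpp
        exact congrArg Subtype.val (h2.1 this)
      · have h1p' := (hcover p').resolve_right h2p'
        exact absurd ⟨⟨p', h1p'⟩, by rw [← hs1 p' h1p', ← hpp, hs2 p h2p]⟩ (hod3 p h2p h1p)
  · intro π' hinj
    have hr1 : Function.Injective (fun p : {p // p ∈ P1} => π' p.1) :=
      fun a b h => Subtype.ext (hinj h)
    have hr2 : Function.Injective (fun p : {p // p ∈ P2} => π' p.1) :=
      fun a b h => Subtype.ext (hinj h)
    have he1 : egalScore S π' ≤ egalScore (fun c (p : {p // p ∈ P1}) => S c p.1) π1 := by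
      refine le_trans ?_ (h1.2 _ hr1)
      apply Finset.le_inf'
      intro p _
      exact Finset.inf'_le _ (Finset.mem_univ p.1)
    have he2 : egalScore S π' ≤ egalScore (fun c (p : {p // p ∈ P2}) => S c p.1) π2 := by
      refine le_trans ?_ (h2.2 _ hr2)
      apply Finset.le_inf'
      intro p _
      exact Finset.inf'_le _ (Finset.mem_univ p.1)
    apply Finset.le_inf'
    intro p _
    rcases hcover p with h | h
    · refine le_trans he1 ?_
      rw [hs1 p h]
      exact Finset.inf'_le _ (Finset.mem_univ (⟨p, h⟩ : {p // p ∈ P1}))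
    · refine le_trans he2 ?_
      rw [hs2 p h]
      exact Finset.inf'_le _ (Finset.mem_univ (⟨p, h⟩ : {p // p ∈ P2}))
end

section
/- The utilitarian rule satisfies weak position consistency: if π' is a utilitarian-winning line-up on P' and π'' a utilitarian-winning line-up on P'' with P' ∪ P'' = P, and π', π'' are overlapping-disjoint, then π' ∪ π'' is a utilitarian-winning line-up of the full election on P. -/
open Function

/-- The utilitarian rule satisfies weak position consistency. -/
theorem stmt14 {C P : Type*} [Fintype C] [Fintype P] [DecidableEq P] (S : C → P → ℚ)
    (P1 P2 : Finset P) (hcover : ∀ p : P, p ∈ P1 ∨ p ∈ P2)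
    (π1 : {p // p ∈ P1} → C) (π2 : {p // p ∈ P2} → C) (πs : P → C)
    (hod1 : ∀ (p : P) (h1 : p ∈ P1) (h2 : p ∈ P2), π1 ⟨p, h1⟩ = π2 ⟨p, h2⟩)
    (hod2 : ∀ (p : P) (h1 : p ∈ P1), p ∉ P2 → π1 ⟨p, h1⟩ ∉ Set.range π2)
    (hod3 : ∀ (p : P) (h2 : p ∈ P2), p ∉ P1 → π2 ⟨p, h2⟩ ∉ Set.range π1)
    (hs1 : ∀ (p : P) (h : p ∈ P1), πs p = π1 ⟨p, h⟩)
    (hs2 : ∀ (p : P) (h : p ∈ P2), πs p = π2 ⟨p, h⟩)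
    (h1 : IsUtilWinner (fun c (p : {p // p ∈ P1}) => S c p.1) π1)
    (h2 : IsUtilWinner (fun c (p : {p // p ∈ P2}) => S c p.1) π2) :
    IsUtilWinner S πs := by
  classical
  -- `πs` is injective
  have hπs : Function.Injective πs := by
    intro p q hpq
    rcases hcover p with hp | hp <;> rcases hcover q with hq | hq
    · exact congrArg Subtype.val
        (h1.1 (show π1 ⟨p, hp⟩ = π1 ⟨q, hq⟩ by
          rw [← hs1 p hp, ← hs1 q hq]; exact hpq))
    · by_cases hp2 : p ∈ P2
      · exact congrArg Subtype.val
          (h2.1 (show π2 ⟨p, hp2⟩ = π2 ⟨q, hq⟩ by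
            rw [← hs2 p hp2, ← hs2 q hq]; exact hpq))
      · exact absurd ⟨⟨q, hq⟩, by rw [← hs2 q hq, ← hpq, hs1 p hp]⟩ (hod2 p hp hp2)
    · by_cases hq2 : q ∈ P2
      · exact congrArg Subtype.val
          (h2.1 (show π2 ⟨p, hp⟩ = π2 ⟨q, hq2⟩ by
            rw [← hs2 p hp, ← hs2 q hq2]; exact hpq))
      · exact absurd ⟨⟨p, hp⟩, by rw [← hs2 p hp, hpq, hs1 q hq]⟩ (hod2 q hq hq2)
    · exact congrArg Subtype.val
        (h2.1 (show π2 ⟨p, hp⟩ = π2 ⟨q, hq⟩ by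
          rw [← hs2 p hp, ← hs2 q hq]; exact hpq))
  refine ⟨hπs, ?_⟩
  intro πh hπh
  -- the fixed-point set Z ⊆ P1 ∩ P2
  set F : Set P →o Set P :=
    ⟨fun W => {o | o ∈ P1 ∧ o ∈ P2 ∧ ∃ x, ((x ∈ P1 ∧ x ∉ P2) ∨ x ∈ W) ∧ πh x = πs o},
     by
       intro W W' hWW' o ho
       exact ⟨ho.1, ho.2.1, ho.2.2.choose,
         ho.2.2.choose_spec.1.imp id (fun h => hWW' h), ho.2.2.choose_spec.2⟩⟩ with hF
  set Z : Set P := OrderHom.lfp F with hZdef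
  have hfix : F Z = Z := OrderHom.map_lfp F
  have hmemF : ∀ o, o ∈ Z → o ∈ F Z := fun o ho => by rw [hfix]; exact ho
  have hZ1 : ∀ o ∈ Z, o ∈ P1 := fun o ho => (hmemF o ho).1
  have hZ2 : ∀ o ∈ Z, o ∈ P2 := fun o ho => (hmemF o ho).2.1
  have hfwd : ∀ o ∈ Z, ∃ x, ((x ∈ P1 ∧ x ∉ P2) ∨ x ∈ Z) ∧ πh x = πs o :=
    fun o ho => (hmemF o ho).2.2
  have hback : ∀ o, o ∈ P1 → o ∈ P2 → ∀ x, ((x ∈ P1 ∧ x ∉ P2) ∨ x ∈ Z) →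
      πh x = πs o → o ∈ Z := by
    intro o ho1 ho2 x hx he
    rw [← hfix]; exact ⟨ho1, ho2, x, hx, he⟩
  -- the two competitor line-ups
  set g1 : P → C := fun p => if p ∈ P2 ∧ p ∉ Z then πs p else πh p with hg1
  set g2 : P → C := fun p => if p ∈ Z then πs p else πh p with hg2
  have hinj1 : Function.Injective (fun p : {p // p ∈ P1} => g1 p.1) := by
    intro p q hpq
    simp only [hg1] at hpq
    apply Subtype.ext
    by_cases hp : p.1 ∈ P2 ∧ p.1 ∉ Z <;> by_cases hq : q.1 ∈ P2 ∧ q.1 ∉ Z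
    · rw [if_pos hp, if_pos hq] at hpq; exact hπs hpq
    · rw [if_pos hp, if_neg hq] at hpq
      -- πs p.1 = πh q.1 with q.1 ∈ P1 and (q.1 ∉ P2 ∨ q.1 ∈ Z): hence p.1 ∈ Z, contra
      exfalso
      apply hp.2
      refine hback p.1 p.2 hp.1 q.1 ?_ hpq.symm
      by_cases hq2 : q.1 ∈ P2
      · right
        by_contra hqz
        exact hq ⟨hq2, hqz⟩
      · exact Or.inl ⟨q.2, hq2⟩
    · rw [if_neg hp, if_pos hq] at hpq
      exfalso
      apply hq.2
      refine hback q.1 q.2 hq.1 p.1 ?_ hpq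
      by_cases hp2 : p.1 ∈ P2
      · right
        by_contra hpz
        exact hp ⟨hp2, hpz⟩
      · exact Or.inl ⟨p.2, hp2⟩
    · rw [if_neg hp, if_neg hq] at hpq; exact hπh hpq
  have hinj2 : Function.Injective (fun p : {p // p ∈ P2} => g2 p.1) := by
    intro p q hpq
    simp only [hg2] at hpq
    apply Subtype.ext
    by_cases hp : p.1 ∈ Z <;> by_cases hq : q.1 ∈ Z
    · rw [if_pos hp, if_pos hq] at hpq; exact hπs hpq
    · rw [if_pos hp, if_neg hq] at hpq
      obtain ⟨x, hx, he⟩ := hfwd p.1 hp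
      have hxq : x = q.1 := hπh (he.trans hpq)
      subst hxq
      rcases hx with ⟨_, hx2⟩ | hxz
      · exact absurd q.2 hx2
      · exact absurd hxz hq
    · rw [if_neg hp, if_pos hq] at hpq
      obtain ⟨x, hx, he⟩ := hfwd q.1 hq
      have hxp : x = p.1 := hπh (he.trans hpq.symm)
      subst hxp
      rcases hx with ⟨_, hx2⟩ | hxz
      · exact absurd p.2 hx2
      · exact absurd hxz hp
    · rw [if_neg hp, if_neg hq] at hpq; exact hπh hpq
  have key1 := h1.2 (fun p : {p // p ∈ P1} => g1 p.1) hinj1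
  have key2 := h2.2 (fun p : {p // p ∈ P2} => g2 p.1) hinj2
  -- rewrite all utilScores as Finset sums
  have e1 : utilScore (fun c (p : {p // p ∈ P1}) => S c p.1)
      (fun p : {p // p ∈ P1} => g1 p.1) = ∑ p ∈ P1, S (g1 p) p := by
    rw [utilScore]; exact Finset.sum_coe_sort P1 (fun p => S (g1 p) p)
  have e2 : utilScore (fun c (p : {p // p ∈ P2}) => S c p.1)
      (fun p : {p // p ∈ P2} => g2 p.1) = ∑ p ∈ P2, S (g2 p) p := by
    rw [utilScore]; exact Finset.sum_coe_sort P2 (fun p => S (g2 p) p)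
  have epi1 : utilScore (fun c (p : {p // p ∈ P1}) => S c p.1) π1
      = ∑ p ∈ P1, S (πs p) p := by
    rw [utilScore]
    rw [show (∑ p : {p // p ∈ P1}, S (π1 p) p.1)
        = ∑ p : {p // p ∈ P1}, S (πs p.1) p.1 from
      Finset.sum_congr rfl (fun p _ => by rw [hs1 p.1 p.2])]
    exact Finset.sum_coe_sort P1 (fun p => S (πs p) p)
  have epi2 : utilScore (fun c (p : {p // p ∈ P2}) => S c p.1) π2
      = ∑ p ∈ P2, S (πs p) p := by
    rw [utilScore]
    rw [show (∑ p : {p // p ∈ P2}, S (π2 p) p.1)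
        = ∑ p : {p // p ∈ P2}, S (πs p.1) p.1 from
      Finset.sum_congr rfl (fun p _ => by rw [hs2 p.1 p.2])]
    exact Finset.sum_coe_sort P2 (fun p => S (πs p) p)
  have hU : P1 ∪ P2 = Finset.univ := by
    ext p; simpa using hcover p
  have hiesum : ∀ f : P → ℚ, ∑ p ∈ P1, f p + ∑ p ∈ P2, f p
      = (∑ p, f p) + ∑ p ∈ P1 ∩ P2, f p := by
    intro f
    rw [← Finset.sum_union_inter, hU]
  have hite : ∀ (s : Finset P) (f : P → ℚ),
      ∑ p ∈ s, f p = ∑ p, if p ∈ s then f p else 0 := by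
    intro s f
    rw [Finset.sum_ite_mem, Finset.univ_inter]
  -- the key accounting identity
  have hmain : ∑ p ∈ P1, S (g1 p) p + ∑ p ∈ P2, S (g2 p) p
      = (∑ p, S (πh p) p) + ∑ p ∈ P1 ∩ P2, S (πs p) p := by
    rw [hite P1, hite P2, hite (P1 ∩ P2), ← Finset.sum_add_distrib,
      ← Finset.sum_add_distrib]
    refine Finset.sum_congr rfl fun p _ => ?_
    by_cases hp1 : p ∈ P1 <;> by_cases hp2 : p ∈ P2
    · by_cases hpz : p ∈ Z
      · simp only [hg1, hg2, if_pos hp1, if_pos hp2, if_pos hpz,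
          if_neg (by simp [hpz] : ¬(p ∈ P2 ∧ p ∉ Z)),
          if_pos (Finset.mem_inter.mpr ⟨hp1, hp2⟩)]
        try ring
      · simp only [hg1, hg2, if_pos hp1, if_pos hp2, if_neg hpz,
          if_pos (⟨hp2, hpz⟩ : p ∈ P2 ∧ p ∉ Z),
          if_pos (Finset.mem_inter.mpr ⟨hp1, hp2⟩)]
        try ring
    · have hpz : p ∉ Z := fun h => hp2 (hZ2 p h)
      simp only [hg1, if_pos hp1, if_neg hp2, if_neg hpz,
        if_neg (by simp [hp2] : ¬(p ∈ P2 ∧ p ∉ Z)),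
        if_neg (by simp [hp2] : p ∉ P1 ∩ P2)]
      try ring
    · have hpz : p ∉ Z := fun h => hp1 (hZ1 p h)
      simp only [hg2, if_neg hp1, if_pos hp2, if_neg hpz,
        if_neg (by simp [hp1] : p ∉ P1 ∩ P2)]
      try ring
    · exact absurd (hcover p) (by simp [hp1, hp2])
  have hsplit := hiesum (fun p => S (πs p) p)
  have hgoal1 : utilScore S πh = ∑ p, S (πh p) p := rfl
  have hgoal2 : utilScore S πs = ∑ p, S (πs p) p := rfl
  rw [e1, epi1] at key1
  rw [e2, epi2] at key2
  rw [hgoal1, hgoal2]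
  linarith [key1, key2, hmain, hsplit]
end

section
/- The max-first sequential rule is a 1/2-approximation of the utilitarian rule: for every line-up election with nonnegative scores, the summed score of any line-up produced by the max-first rule is at least half of the maximum achievable summed score. -/
open Function

/-- The max-first rule is a 1/2-approximation of the utilitarian rule. -/
theorem stmt15 {C P : Type*} [Fintype P] (S : C → P → ℚ) (hpos : ∀ c p, 0 ≤ S c p)
    (π : P → C) (h : MaxFirstOutcome S π)
    (π' : P → C) (h' : Function.Injective π') :
    utilScore S π' ≤ 2 * utilScore S π := by
  classical
  obtain ⟨r, hr, hπ, hmax⟩ := h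
  set A : Finset P := Finset.univ.filter (fun p => ∃ p', r p' < r p ∧ π p' = π' p) with hAdef
  have hAmem : ∀ p : P, p ∈ A ↔ ∃ p', r p' < r p ∧ π p' = π' p := by
    intro p; simp [hAdef]
  have hex : ∀ p : P, ∃ q : P, (p ∈ A → r q < r p ∧ π q = π' p) ∧ (p ∉ A → q = p) := by
    intro p
    by_cases hp : p ∈ A
    · obtain ⟨q, h1, h2⟩ := (hAmem p).1 hp
      exact ⟨q, fun _ => ⟨h1, h2⟩, fun hcon => absurd hp hcon⟩
    · exact ⟨p, fun hcon => absurd hcon hp, fun _ => rfl⟩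
  choose σ hσ _ using hex
  have hinj : ∀ p ∈ A, ∀ q ∈ A, σ p = σ q → p = q := by
    intro p hp q hq hpq
    apply h'
    have e1 := (hσ p hp).2
    have e2 := (hσ q hq).2
    rw [← e1, ← e2, hpq]
  have hboundA : ∀ p ∈ A, S (π' p) p ≤ S (π (σ p)) (σ p) := by
    intro p hp
    obtain ⟨hlt, heq⟩ := hσ p hp
    apply hmax (σ p) p hlt.le (π' p)
    intro p'' hlt'' hne
    have : σ p = p'' := hπ (heq.trans hne)
    rw [← this] at hlt''
    exact absurd hlt'' (lt_irrefl _)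
  have hboundB : ∀ p ∈ Aᶜ, S (π' p) p ≤ S (π p) p := by
    intro p hp
    rw [Finset.mem_compl] at hp
    apply hmax p p le_rfl (π' p)
    intro p'' hlt'' hne
    exact hp ((hAmem p).2 ⟨p'', hlt'', hne.symm⟩)
  have hA1 : ∑ p ∈ A, S (π' p) p ≤ utilScore S π := by
    calc ∑ p ∈ A, S (π' p) p ≤ ∑ p ∈ A, S (π (σ p)) (σ p) :=
          Finset.sum_le_sum hboundA
      _ = ∑ q ∈ A.image σ, S (π q) q := (Finset.sum_image (f := fun q => S (π q) q) hinj).symm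
      _ ≤ ∑ q, S (π q) q := by
          apply Finset.sum_le_sum_of_subset_of_nonneg (Finset.subset_univ _)
          intro q _ _; exact hpos _ _
  have hA2 : ∑ p ∈ Aᶜ, S (π' p) p ≤ utilScore S π := by
    calc ∑ p ∈ Aᶜ, S (π' p) p ≤ ∑ p ∈ Aᶜ, S (π p) p :=
          Finset.sum_le_sum hboundB
      _ ≤ ∑ q, S (π q) q := by
          apply Finset.sum_le_sum_of_subset_of_nonneg (Finset.subset_univ _)
          intro q _ _; exact hpos _ _
  have hsplit : utilScore S π' = ∑ p ∈ A, S (π' p) p + ∑ p ∈ Aᶜ, S (π' p) p :=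
    (Finset.sum_add_sum_compl A _).symm
  linarith
end

section
/- The price of reasonable satisfaction is exactly 1/2: (a) for every ε > 0 there is a line-up election with nonnegative scores in which the maximum utilitarian welfare of any reasonably satisfying line-up is less than (1/2 + ε) times the maximum utilitarian welfare; (b) in every election with nonnegative scores there exists a reasonably satisfying line-up with utilitarian welfare at least half the maximum utilitarian welfare. -/
open Function

lemma sum_split_aux {α : Type} [Fintype α] [DecidableEq α] (a : α) (f : α → ℚ) :
    ∑ x, f x = f a + ∑ x : {x // x ≠ a}, f x.1 := by
  rw [Fintype.sum_eq_add_sum_compl a f]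
  congr 1
  exact Finset.sum_subtype ({a}ᶜ) (fun x => by simp [Finset.mem_compl]) f

lemma greedy_aux : ∀ (n : ℕ) (C P : Type) [Fintype C] [Fintype P],
    Fintype.card P = n → ∀ S : C → P → ℚ, (∀ c p, 0 ≤ S c p) →
    Fintype.card P ≤ Fintype.card C →
    ∃ π : P → C, Function.Injective π ∧ ReasonablySatisfying S π ∧
      ∀ π' : P → C, Function.Injective π' → utilScore S π' ≤ 2 * utilScore S π := by
  intro n
  induction n with
  | zero =>
    intro C P _ _ hcard S hS hle
    haveI : IsEmpty P := Fintype.card_eq_zero_iff.mp hcard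
    refine ⟨fun p => isEmptyElim p, fun a => isEmptyElim a, ⟨?_, ?_⟩, ?_⟩
    · rintro ⟨p, _⟩; exact isEmptyElim p
    · rintro ⟨c, p, _⟩; exact isEmptyElim p
    · intro π' _; simp [utilScore]
  | succ n ih =>
    intro C P _ _ hcard S hS hle
    classical
    haveI : Nonempty P := Fintype.card_pos_iff.mp (by omega)
    haveI : Nonempty C := Fintype.card_pos_iff.mp (by omega)
    obtain ⟨⟨c0, p0⟩, hmax0⟩ := Finite.exists_max (fun x : C × P => S x.1 x.2)
    have hmax : ∀ c p, S c p ≤ S c0 p0 := fun c p => hmax0 (c, p)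
    have hcP' : Fintype.card {p : P // p ≠ p0} = n := by
      have h1 : Fintype.card {p : P // p ≠ p0} = Fintype.card P - 1 := by
        simp [Fintype.card_subtype_compl (fun p => p = p0), Fintype.card_subtype_eq]
      omega
    have hcC' : Fintype.card {c : C // c ≠ c0} = Fintype.card C - 1 := by
      simp [Fintype.card_subtype_compl (fun c => c = c0), Fintype.card_subtype_eq]
    obtain ⟨ρ, hρinj, hρRS, hρap⟩ :=
      ih {c : C // c ≠ c0} {p : P // p ≠ p0} hcP'
        (fun c p => S c.1 p.1) (fun c p => hS c.1 p.1) (by omega)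
    set π : P → C := fun p => if h : p = p0 then c0 else (ρ ⟨p, h⟩ : C) with hπdef
    have hπ0 : π p0 = c0 := dif_pos rfl
    have hπne : ∀ (p : P) (h : p ≠ p0), π p = (ρ ⟨p, h⟩ : C) := fun p h => dif_neg h
    have hπinj : Function.Injective π := by
      intro a b hab
      by_cases ha : a = p0 <;> by_cases hb : b = p0
      · rw [ha, hb]
      · rw [ha, hπ0, hπne b hb] at hab; exact absurd hab.symm (ρ ⟨b, hb⟩).2
      · rw [hb, hπ0, hπne a ha] at hab; exact absurd hab (ρ ⟨a, ha⟩).2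
      · rw [hπne a ha, hπne b hb] at hab
        have := hρinj (Subtype.coe_injective hab)
        exact congrArg Subtype.val this
    have hsplitπ : utilScore S π = S c0 p0 + utilScore (fun (c : {c : C // c ≠ c0}) (p : {p : P // p ≠ p0}) => S c.1 p.1) ρ := by
      rw [utilScore, sum_split_aux p0 (fun p => S (π p) p), hπ0]
      congr 1
      apply Finset.sum_congr rfl
      intro q _
      rw [hπne q.1 q.2]
    refine ⟨π, hπinj, ⟨?_, ?_⟩, ?_⟩
    · rintro ⟨p, p', h1, h2⟩
      by_cases hp : p = p0
      · subst hp; rw [hπ0] at h1; exact absurd h1 (not_lt.mpr (hmax _ _))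
      · by_cases hp' : p' = p0
        · subst hp'; rw [hπ0] at h2; exact absurd h2 (not_lt.mpr (hmax _ _))
        · refine hρRS.1 ⟨⟨p, hp⟩, ⟨p', hp'⟩, ?_, ?_⟩
          · rw [hπne p hp, hπne p' hp'] at h1; exact h1
          · rw [hπne p' hp'] at h2; exact h2
    · rintro ⟨c, p, hc, hgt⟩
      by_cases hp : p = p0
      · subst hp; exact absurd hgt (not_lt.mpr (by rw [hπ0]; exact hmax _ _))
      · have hcc0 : c ≠ c0 := fun h => hc ⟨p0, by rw [hπ0, h]⟩
        refine hρRS.2 ⟨⟨c, hcc0⟩, ⟨p, hp⟩, ?_, ?_⟩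
        · rintro ⟨q, hq⟩
          exact hc ⟨q.1, by rw [hπne q.1 q.2, hq]⟩
        · rw [hπne p hp] at hgt; exact hgt
    · intro σ hσ
      have hsplitσ : utilScore S σ
          = S (σ p0) p0 + ∑ p : {p : P // p ≠ p0}, S (σ p.1) p.1 :=
        sum_split_aux p0 (fun p => S (σ p) p)
      by_cases hcase : ∃ p1 : {p : P // p ≠ p0}, σ p1.1 = c0
      · obtain ⟨p1, hp1⟩ := hcase
        have hσp0 : σ p0 ≠ c0 := fun h => p1.2 (hσ (hp1.trans h.symm))
        have hne : ∀ p : {p : P // p ≠ p0}, p ≠ p1 → σ p.1 ≠ c0 :=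
          fun p hp h => hp (Subtype.ext (hσ (h.trans hp1.symm)))
        set τ : {p : P // p ≠ p0} → {c : C // c ≠ c0} :=
          fun p => if h : p = p1 then ⟨σ p0, hσp0⟩ else ⟨σ p.1, hne p h⟩ with hτdef
        have hτinj : Function.Injective τ := by
          intro a b hab
          by_cases ha : a = p1 <;> by_cases hb : b = p1
          · rw [ha, hb]
          · rw [hτdef] at hab; simp only [dif_pos ha, dif_neg hb] at hab
            have := hσ (congrArg Subtype.val hab)
            exact absurd this.symm b.2
          · rw [hτdef] at hab; simp only [dif_pos hb, dif_neg ha] at hab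
            have := hσ (congrArg Subtype.val hab)
            exact absurd this a.2
          · rw [hτdef] at hab; simp only [dif_neg ha, dif_neg hb] at hab
            exact Subtype.ext (hσ (congrArg Subtype.val hab))
        have h1 := hρap τ hτinj
        have hsplitτ : utilScore (fun (c : {c : C // c ≠ c0}) (p : {p : P // p ≠ p0}) => S c.1 p.1) τ
            = S (σ p0) p1.1 + ∑ p : {p : {p : P // p ≠ p0} // p ≠ p1}, S (σ p.1.1) p.1.1 := by
          rw [utilScore, sum_split_aux p1 (fun p => S ((τ p) : C) p.1)]
          congr 1
          · simp [hτdef]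
          · apply Finset.sum_congr rfl
            intro q _
            rw [hτdef]; simp only [dif_neg q.2]
        have hsplit2 : ∑ p : {p : P // p ≠ p0}, S (σ p.1) p.1
            = S c0 p1.1 + ∑ p : {p : {p : P // p ≠ p0} // p ≠ p1}, S (σ p.1.1) p.1.1 := by
          rw [sum_split_aux p1 (fun p : {p : P // p ≠ p0} => S (σ p.1) p.1), hp1]
        have h2 : S c0 p1.1 ≤ S c0 p0 := hmax _ _
        have h3 : S (σ p0) p0 ≤ S c0 p0 := hmax _ _
        have h4 : 0 ≤ S (σ p0) p1.1 := hS _ _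
        have h5 : 0 ≤ S c0 p0 := hS _ _
        linarith
      · push_neg at hcase
        set τ : {p : P // p ≠ p0} → {c : C // c ≠ c0} :=
          fun p => ⟨σ p.1, hcase p⟩ with hτdef
        have hτinj : Function.Injective τ :=
          fun a b hab => Subtype.ext (hσ (congrArg Subtype.val hab))
        have h1 := hρap τ hτinj
        have h2 : utilScore (fun (c : {c : C // c ≠ c0}) (p : {p : P // p ≠ p0}) => S c.1 p.1) τ
            = ∑ p : {p : P // p ≠ p0}, S (σ p.1) p.1 := rfl
        have h3 : S (σ p0) p0 ≤ S c0 p0 := hmax _ _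
        have h5 : 0 ≤ S c0 p0 := hS _ _
        linarith


/-- The price of reasonable satisfaction is exactly 1/2. -/
theorem stmt16 :
    (∀ ε : ℚ, 0 < ε → ∃ S : Fin 2 → Fin 2 → ℚ, (∀ c p, 0 ≤ S c p) ∧
      ∃ πopt : Fin 2 → Fin 2, IsUtilWinner S πopt ∧
        ∀ π : Fin 2 → Fin 2, Function.Injective π → ReasonablySatisfying S π →
          utilScore S π < (1/2 + ε) * utilScore S πopt) ∧
    (∀ (C P : Type) [Fintype C] [Fintype P], ∀ S : C → P → ℚ, (∀ c p, 0 ≤ S c p) →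
      Fintype.card P ≤ Fintype.card C →
      ∃ π : P → C, Function.Injective π ∧ ReasonablySatisfying S π ∧
        ∀ π' : P → C, Function.Injective π' → utilScore S π' ≤ 2 * utilScore S π) := by
  constructor
  · intro ε hε
    set e := min ε 1 with he
    have he0 : 0 < e := lt_min hε one_pos
    have he1 : e ≤ 1 := min_le_right _ _
    have heε : e ≤ ε := min_le_left _ _
    refine ⟨fun c p => ![![2, 2 - e], ![2 - e, 0]] c p, ?_, ![1, 0], ⟨by decide, ?_⟩, ?_⟩
    · intro c p
      fin_cases c <;> fin_cases p <;> simp <;> linarith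
    · intro π' hπ'
      have h01 : π' 0 ≠ π' 1 := fun h => absurd (hπ' h) (by decide)
      have h0 : π' 0 = 0 ∨ π' 0 = 1 := by omega
      rcases h0 with h0 | h0
      · have h1 : π' 1 = 1 := by omega
        simp [utilScore, Fin.sum_univ_two, h0, h1]
        linarith
      · have h1 : π' 1 = 0 := by omega
        simp [utilScore, Fin.sum_univ_two, h0, h1]
    · intro π hπ hRS
      have h01 : π 0 ≠ π 1 := fun h => absurd (hπ h) (by decide)
      have h0 : π 0 = 0 ∨ π 0 = 1 := by omega
      rcases h0 with h0 | h0
      · have h1 : π 1 = 1 := by omega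
        have hval : utilScore (fun c p => ![![2, 2 - e], ![2 - e, 0]] c p) π = 2 := by
          simp [utilScore, Fin.sum_univ_two, h0, h1]
        have hopt : utilScore (fun c p => ![![2, 2 - e], ![2 - e, 0]] c p) ![1, 0] = 4 - 2 * e := by
          simp [utilScore, Fin.sum_univ_two]
          ring
        rw [hval, hopt]
        have hεe : ε * e ≤ ε * 1 := mul_le_mul_of_nonneg_left he1 hε.le
        nlinarith
      · have h1 : π 1 = 0 := by omega
        exfalso
        refine hRS.1 ⟨0, 1, ?_, ?_⟩
        · rw [h0, h1]; simp; linarith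
        · rw [h1]; simp; linarith
  · intro C P _ _ S hS hle
    exact greedy_aux (Fintype.card P) C P rfl S hS hle
end

section
/- For every length-2 OWA-vector Λ other than (1,0), the OWA-rule f^Λ is not weakly reasonably satisfying: there exists a 2-candidate 2-position election in which the unique Λ-winning line-up contains a reasonably dissatisfied candidate-position pair. -/
open Function

lemma owa_two (Λ v : Fin 2 → ℚ) :
    owa Λ v = Λ 0 * max (v 0) (v 1) + Λ 1 * min (v 0) (v 1) := by
  unfold owa sortedDesc
  rw [Fin.sum_univ_two]
  set σ := Tuple.sort (fun i => -v i) with hσ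
  have hmono : Monotone ((fun i => -v i) ∘ σ) := Tuple.monotone_sort _
  have h01 : -v (σ 0) ≤ -v (σ 1) := hmono (by norm_num : (0:Fin 2) ≤ 1)
  have hv : v (σ 1) ≤ v (σ 0) := by linarith
  have hne : σ 0 ≠ σ 1 := fun h => by simpa using σ.injective h
  have h0 : σ 0 = 0 ∨ σ 0 = 1 := by omega
  have h1 : σ 1 = 0 ∨ σ 1 = 1 := by omega
  rcases h0 with h0 | h0 <;> rcases h1 with h1 | h1 <;>
    first
    | (exact absurd (h0.trans h1.symm) hne)
    | (simp only [Function.comp_apply, h0, h1]; rw [h0, h1] at hv;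
       rw [max_eq_left hv, min_eq_right hv])
    | (simp only [Function.comp_apply, h0, h1]; rw [h0, h1] at hv;
       rw [max_eq_right hv, min_eq_left hv]; try ring)

lemma inj_fin2 (f : Fin 2 → Fin 2) (hf : Function.Injective f) :
    f = id ∨ f = ![1, 0] := by
  revert hf
  have : ∀ f : Fin 2 → Fin 2, Function.Injective f → f = id ∨ f = ![1, 0] := by decide
  exact this f

/-- For every normalized nonnegative length-2 OWA-vector other than (1,0), the
OWA-rule is not weakly reasonably satisfying. -/
theorem stmt17 (Λ : Fin 2 → ℚ) (hnn : ∀ i, 0 ≤ Λ i) (hle : ∀ i, Λ i ≤ 1)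
    (hmax : Λ 0 = 1 ∨ Λ 1 = 1) (hne : Λ ≠ ![1, 0]) :
    ∃ (S : Fin 2 → Fin 2 → ℚ) (π : Fin 2 → Fin 2),
      (∀ π' : Fin 2 → Fin 2, IsOWAWinner Λ S π' ↔ π' = π) ∧
      ¬ ReasonablySatisfying S π := by
  have h1pos : 0 < Λ 1 := by
    rcases lt_or_eq_of_le (hnn 1) with h | h
    · exact h
    · exfalso
      apply hne
      have hΛ1 : Λ 1 = 0 := h.symm
      have hΛ0 : Λ 0 = 1 := by
        rcases hmax with h' | h'
        · exact h'
        · rw [h'] at hΛ1; norm_num at hΛ1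
      funext i
      have : i = 0 ∨ i = 1 := by omega
      rcases this with rfl | rfl <;> simp [hΛ0, hΛ1]
  set S : Fin 2 → Fin 2 → ℚ := ![![1, 1 + Λ 1 / 2], ![0, 1]] with hS
  refine ⟨S, id, ?_, ?_⟩
  · -- score vectors
    have hsid : scoreVec S id = ![1, 1] := by
      funext p
      have : p = 0 ∨ p = 1 := by omega
      rcases this with rfl | rfl <;> simp [scoreVec, hS]
    have hssw : scoreVec S ![1, 0] = ![0, 1 + Λ 1 / 2] := by
      funext p
      have : p = 0 ∨ p = 1 := by omega
      rcases this with rfl | rfl <;> simp [scoreVec, hS]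
    have hoid : owa Λ (scoreVec S id) = Λ 0 + Λ 1 := by
      rw [hsid, owa_two]; norm_num
    have hosw : owa Λ (scoreVec S ![1, 0]) = Λ 0 * (1 + Λ 1 / 2) := by
      rw [hssw, owa_two]
      have hpos : (0:ℚ) ≤ 1 + Λ 1 / 2 := by linarith
      simp only [Matrix.cons_val_zero, Matrix.cons_val_one, Matrix.head_cons]
      rw [max_eq_right hpos, min_eq_left hpos]
      ring
    have hstrict : owa Λ (scoreVec S ![1, 0]) < owa Λ (scoreVec S id) := by
      rw [hoid, hosw]
      have h0le : Λ 0 ≤ 1 := hle 0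
      nlinarith [hnn 0]
    intro π'
    constructor
    · rintro ⟨hinj, hwin⟩
      rcases inj_fin2 π' hinj with rfl | rfl
      · rfl
      · exfalso
        have := hwin id Function.injective_id
        linarith
    · rintro rfl
      refine ⟨Function.injective_id, fun π' hinj' => ?_⟩
      rcases inj_fin2 π' hinj' with rfl | rfl
      · exact le_refl _
      · exact le_of_lt hstrict
  · rintro ⟨h1, _⟩
    apply h1
    refine ⟨1, 0, ?_, ?_⟩ <;> simp [hS] <;> linarith
end

section
/- The min-first sequential rule violates weak line-up enlargement monotonicity: there is an election with 6 candidates and 4 positions whose unique min-first winner assigns a set of candidates that is not contained in the set of candidates of the unique min-first winner after adding a fifth position. -/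
/-! The min-first rule never has a choice in either election: at every stage exactly one
position-candidate pair is a legal move, so an induction along any min-first order shows that it
replays that forced run. Both winners are therefore unique, and candidate `d` is used by the
winner on four positions but not by the one on five. -/

open Function

section MinFirst

variable {C P : Type*} {S : C → P → ℚ}

def IsUnassignedBefore (r : P → ℕ) (π : P → C) (n : ℕ) (c : C) : Prop :=
  ∀ q, r q < n → c ≠ π q

/-- The positions `q` with `r q < n` have already been filled, `q` with `π q`; the move fills
`p` with `c`. -/
def IsMinFirstMove (S : C → P → ℚ) (r : P → ℕ) (π : P → C) (n : ℕ) (p : P) (c : C) : Prop :=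
  n ≤ r p ∧ IsUnassignedBefore r π n c ∧
    (∀ c', IsUnassignedBefore r π n c' → S c' p ≤ S c p) ∧
    ∀ p', n ≤ r p' → ∃ c', IsUnassignedBefore r π n c' ∧ S c p ≤ S c' p'

instance [Fintype C] [Fintype P] [DecidableEq C] (S : C → P → ℚ) (r : P → ℕ) (π : P → C)
    (n : ℕ) (p : P) (c : C) : Decidable (IsMinFirstMove S r π n p c) := by
  unfold IsMinFirstMove IsUnassignedBefore; infer_instance

/-- `ρ p` is the stage at which `p` is filled, and then filling it with `π₀ p` is the only legal
move. -/
def IsForcedMinFirstRun (S : C → P → ℚ) (ρ : P → ℕ) (π₀ : P → C) : Prop :=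
  ∀ p p' c, IsMinFirstMove S ρ π₀ (ρ p) p' c ↔ p' = p ∧ c = π₀ p

instance [Fintype C] [Fintype P] [DecidableEq C] [DecidableEq P] (S : C → P → ℚ) (ρ : P → ℕ)
    (π₀ : P → C) : Decidable (IsForcedMinFirstRun S ρ π₀) := by
  unfold IsForcedMinFirstRun; infer_instance

theorem minFirstOrder_iff {r : P → ℕ} {π : P → C} :
    MinFirstOrder r S π ↔ Injective π ∧ ∀ p, IsMinFirstMove S r π (r p) p (π p) := by
  refine ⟨fun ⟨hπ, hbest, hmin⟩ => ⟨hπ, fun p => ⟨le_rfl, ?_, hbest p, hmin p⟩⟩,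
    fun ⟨hπ, h⟩ => ⟨hπ, fun p => (h p).2.2.1, fun p => (h p).2.2.2⟩⟩
  exact fun q hq hpq => (hq.trans_eq (congrArg r (hπ hpq))).false

theorem isMinFirstMove_congr {r ρ : P → ℕ} {π π₀ : P → C} {m n : ℕ}
    (hfree : ∀ c, IsUnassignedBefore r π m c ↔ IsUnassignedBefore ρ π₀ n c)
    (hrest : ∀ p, m ≤ r p ↔ n ≤ ρ p) (p : P) (c : C) :
    IsMinFirstMove S r π m p c ↔ IsMinFirstMove S ρ π₀ n p c := by
  simp only [IsMinFirstMove, hfree, hrest]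

namespace IsForcedMinFirstRun

variable {ρ : P → ℕ} {π₀ : P → C}

theorem injective_rank (h : IsForcedMinFirstRun S ρ π₀) : Injective ρ := by
  intro p q hpq
  have hp : IsMinFirstMove S ρ π₀ (ρ p) p (π₀ p) := (h p p (π₀ p)).2 ⟨rfl, rfl⟩
  exact ((h q p (π₀ p)).1 (hpq ▸ hp)).1

theorem minFirstOrder (h : IsForcedMinFirstRun S ρ π₀) : MinFirstOrder ρ S π₀ := by
  have hmove p : IsMinFirstMove S ρ π₀ (ρ p) p (π₀ p) := (h p p (π₀ p)).2 ⟨rfl, rfl⟩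
  refine minFirstOrder_iff.2 ⟨fun p q hpq => ?_, hmove⟩
  by_contra hne
  rcases (h.injective_rank.ne hne).lt_or_gt with hlt | hlt
  · exact (hmove q).2.1 p hlt hpq.symm
  · exact (hmove p).2.1 q hlt hpq

theorem replays_of_minFirstOrder (h : IsForcedMinFirstRun S ρ π₀) {r : P → ℕ} {π : P → C}
    (hr : Injective r) (hπ : MinFirstOrder r S π) (n : ℕ) :
    ∀ q, ρ q < n → π q = π₀ q ∧ ∀ q', n ≤ ρ q' → r q < r q' := by
  induction n with
  | zero => simp
  | succ n ih =>
    by_cases hn : ∃ p, ρ p = n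
    swap
    · simp only [not_exists] at hn
      intro q hq
      have hqn : ρ q < n := lt_of_le_of_ne (Nat.le_of_lt_succ hq) (hn q)
      exact ⟨(ih q hqn).1, fun q' hq' => (ih q hqn).2 q' (by omega)⟩
    obtain ⟨p, rfl⟩ := hn
    obtain ⟨m, hm, hmin⟩ :=
      (InvImage.wf r wellFounded_lt).has_min {q | ρ p ≤ ρ q} ⟨p, le_refl (ρ p)⟩
    have hrest : ∀ q, r m ≤ r q ↔ ρ p ≤ ρ q := fun q =>
      ⟨fun hq => not_lt.1 fun hlt => (ih q hlt).2 m hm |>.not_ge hq,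
        fun hq => not_lt.1 (hmin q hq)⟩
    have hfree : ∀ c, IsUnassignedBefore r π (r m) c ↔ IsUnassignedBefore ρ π₀ (ρ p) c := by
      refine fun c => ⟨fun hc q hq => (ih q hq).1 ▸ hc q ((ih q hq).2 m hm), fun hc q hq => ?_⟩
      have hqp : ρ q < ρ p := not_le.1 fun hle => hmin q hle hq
      exact (ih q hqp).1 ▸ hc q hqp
    obtain ⟨rfl, hmp⟩ := (h p m (π m)).1
      ((isMinFirstMove_congr hfree hrest m (π m)).1 ((minFirstOrder_iff.1 hπ).2 m))
    intro q hq
    rcases Nat.lt_succ_iff_lt_or_eq.1 hq with hlt | heq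
    · exact ⟨(ih q hlt).1, fun q' hq' => (ih q hlt).2 q' (by omega)⟩
    · obtain rfl := h.injective_rank heq
      refine ⟨hmp, fun q' hq' => lt_of_le_of_ne ((hrest q').2 (by omega)) fun hrq => ?_⟩
      have := congrArg ρ (hr hrq)
      omega

theorem minFirstOutcome_iff (h : IsForcedMinFirstRun S ρ π₀) (π : P → C) :
    MinFirstOutcome S π ↔ π = π₀ := by
  refine ⟨fun ⟨r, hr, hπ⟩ => funext fun q => ?_,
    fun hπ => hπ ▸ ⟨ρ, h.injective_rank, h.minFirstOrder⟩⟩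
  exact (h.replays_of_minFirstOrder hr hπ (ρ q + 1) q (Nat.lt_succ_self _)).1

end IsForcedMinFirstRun

end MinFirst

/-- Candidates `a, …, f` are `0, …, 5`. -/
def scores₅ : Fin 6 → Fin 5 → ℚ :=
  ![![0, 6, 4, 0, 0], ![2, 3, 0, 0, 0], ![7, 0, 0, 5, 1], ![1, 0, 0, 0, 0], ![0, 0, 0, 1, 0],
    ![0, 1, 0, 0, 0]]

def scores₄ : Fin 6 → Fin 4 → ℚ := fun c p => scores₅ c p.castSucc

/-- The min-first rule violates weak line-up enlargement monotonicity: there is an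
election with 6 candidates and 4 positions whose unique min-first winner uses a set
of candidates not contained in that of the unique winner after adding a fifth
position (scores on the old positions unchanged). -/
theorem stmt19 : ∃ (S4 : Fin 6 → Fin 4 → ℚ) (S5 : Fin 6 → Fin 5 → ℚ),
    (∀ (c : Fin 6) (p : Fin 4), S5 c p.castSucc = S4 c p) ∧
    ∃ (π4 : Fin 4 → Fin 6) (π5 : Fin 5 → Fin 6),
      (∀ π : Fin 4 → Fin 6, MinFirstOutcome S4 π ↔ π = π4) ∧
      (∀ π : Fin 5 → Fin 6, MinFirstOutcome S5 π ↔ π = π5) ∧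
      ¬ (Set.range π4 ⊆ Set.range π5) := by
  refine ⟨scores₄, scores₅, fun _ _ => rfl, ![3, 1, 0, 2], ![1, 5, 0, 4, 2],
    IsForcedMinFirstRun.minFirstOutcome_iff (ρ := ![3, 1, 0, 2]) (by decide),
    IsForcedMinFirstRun.minFirstOutcome_iff (ρ := ![2, 4, 3, 1, 0]) (by decide), ?_⟩
  intro hsub
  obtain ⟨q, hq⟩ := hsub (Set.mem_range_self 0)
  revert q hq
  decide
end
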